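/- arXiv:2202.07149 — 2 statements merged into one kernel-verified Lean document; each statement's English description precedes it below -/
import Mathlib

section
/- Let (ℓ_n) be a sequence of positive integers with ℓ_n → ∞ and ℓ_n^3/n → 0. Then there exists n_0 such that for every n ≥ n_0 the following holds: if G is a C_3^{(3)}-saturated 3-uniform hypergraph on n vertices with |E(G)| ≤ 2n, H = {v ∈ V(G) : d(v) ≥ n/ℓ_n^2}, Q is the set of vertices having at least two neighbors in H, and S = V(G) \ (Q ∪ H), then there are no partitions S = S_1 ∪ S_2 ∪ S_3 and H = H_1 ∪ H_2 ∪ H_3 into pairwise disjoint parts such that |S_i| ≥ 4n/ℓ_n for each i ∈ {1,2,3} and S_i ∩ N(H \ H_i) = ∅ for each i ∈ {1,2,3} (i.e., no vertex of S_i shares an edge with a vertex of H \ H_i). -/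
open Finset

variable {V : Type*}

/-- `E` is the edge set of a 3-uniform hypergraph: every edge has 3 vertices. -/
def IsUniform3 [DecidableEq V] (E : Finset (Finset V)) : Prop :=
  ∀ e ∈ E, e.card = 3

/-- `E` contains a copy of the loose cycle `C₃⁽³⁾`: three edges whose pairwise
intersections are three distinct single vertices, with empty triple intersection. -/
def HasC3 [DecidableEq V] (E : Finset (Finset V)) : Prop :=
  ∃ e₁ ∈ E, ∃ e₂ ∈ E, ∃ e₃ ∈ E, ∃ a b c : V,
    e₁ ∩ e₂ = {a} ∧ e₂ ∩ e₃ = {b} ∧ e₁ ∩ e₃ = {c} ∧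
    a ≠ b ∧ b ≠ c ∧ a ≠ c ∧ e₁ ∩ e₂ ∩ e₃ = ∅

/-- `E` is a `C₃⁽³⁾`-saturated 3-uniform hypergraph: it is 3-uniform, `C₃⁽³⁾`-free,
and adding any non-edge triple creates a copy of `C₃⁽³⁾`. -/
def IsSat3 [DecidableEq V] (E : Finset (Finset V)) : Prop :=
  IsUniform3 E ∧ ¬ HasC3 E ∧
    ∀ e : Finset V, e.card = 3 → e ∉ E → HasC3 (insert e E)

/-- The degree of a vertex: the number of edges containing it. -/
def deg [DecidableEq V] (E : Finset (Finset V)) (v : V) : ℕ :=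
  (E.filter fun e => v ∈ e).card

/-- The codegree of a pair of vertices: number of edges containing both. -/
def codeg [DecidableEq V] (E : Finset (Finset V)) (u v : V) : ℕ :=
  (E.filter fun e => u ∈ e ∧ v ∈ e).card

/-- `u` and `v` are distinct and share an edge (`v ∈ N(u)`). -/
def Adj [DecidableEq V] (E : Finset (Finset V)) (u v : V) : Prop :=
  u ≠ v ∧ ∃ e ∈ E, u ∈ e ∧ v ∈ e

/-- `e₁, e₂` form a `u,v`-link: a loose path of two edges from `u` to `v`. -/
def IsLink [DecidableEq V] (E : Finset (Finset V)) (u v : V) (e₁ e₂ : Finset V) : Prop :=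
  e₁ ∈ E ∧ e₂ ∈ E ∧ u ∈ e₁ ∧ v ∈ e₂ ∧ u ∉ e₂ ∧ v ∉ e₁ ∧
    ∃ w, w ∉ ({u, v} : Finset V) ∧ e₁ ∩ e₂ = {w}

/-- `uv` is a good pair: there exists a `u,v`-link. -/
def GoodPair [DecidableEq V] (E : Finset (Finset V)) (u v : V) : Prop :=
  ∃ e₁ e₂, IsLink E u v e₁ e₂

/-!
Choose `Aᵢ ⊆ Sᵢ` of a common size `k ≥ 4n/ℓ`. A transversal triple of `A₁ × A₂ × A₃` that is not
an edge contains, by saturation, two vertices joined by a link, and the middle vertex `w` of that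
link is a common neighbour of two different parts; the separation hypotheses force `w ∉ H`, i.e.
`d(w) < n/ℓ²`. As the `d(w)` edges at `w` meet the parts in at most `2 d(w)` vertices, counting
the transversal triples through an edge or through such a `w` gives
`3k³ ≤ 3|E| + 4k ∑_{w ∉ H} d(w)²`, while `ℓ² ∑_{w ∉ H} d(w)² ≤ n ∑_w d(w) = 3n|E| ≤ 6n²`.
With `kℓ ≥ 4n` this forces `16n² ≤ ℓ³`, which is impossible once `32ℓ³ < n`.
-/

lemma mem_of_inter_eq_singleton [DecidableEq V] {s t : Finset V} {x : V} (h : s ∩ t = {x}) :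
    x ∈ s ∧ x ∈ t :=
  mem_inter.1 (h ▸ mem_singleton_self x)

namespace GoodPair

variable [DecidableEq V] {E : Finset (Finset V)} {u v : V}

lemma symm (h : GoodPair E u v) : GoodPair E v u := by
  obtain ⟨e₁, e₂, h₁, h₂, hu, hv, hu₂, hv₁, w, hw, hw₁₂⟩ := h
  exact ⟨e₂, e₁, h₂, h₁, hv, hu, hv₁, hu₂, w, by simpa [or_comm] using hw, by rwa [inter_comm]⟩

lemma exists_adj (h : GoodPair E u v) : ∃ w, Adj E u w ∧ Adj E v w := by
  obtain ⟨e₁, e₂, h₁, h₂, hu, hv, -, -, w, hw, hw₁₂⟩ := h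
  simp only [mem_insert, mem_singleton, not_or] at hw
  exact ⟨w, ⟨Ne.symm hw.1, e₁, h₁, hu, (mem_of_inter_eq_singleton hw₁₂).1⟩,
    ⟨Ne.symm hw.2, e₂, h₂, hv, (mem_of_inter_eq_singleton hw₁₂).2⟩⟩

end GoodPair

section Saturation

variable [DecidableEq V] {E : Finset (Finset V)}

lemma isLink_of_inter_eq_singleton {f e e' : Finset V} {a b c : V} (he : e ∈ E) (he' : e' ∈ E)
    (ha : f ∩ e = {a}) (hc : f ∩ e' = {c}) (hb : e ∩ e' = {b})
    (hab : a ≠ b) (hbc : b ≠ c) (hac : a ≠ c) : IsLink E a c e e' := by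
  obtain ⟨haf, hae⟩ := mem_of_inter_eq_singleton ha
  obtain ⟨hcf, hce'⟩ := mem_of_inter_eq_singleton hc
  refine ⟨he, he', hae, hce', fun hae' => hac ?_, fun hce => hac ?_, b,
    by simp [hab.symm, hbc], hb⟩
  · simpa [hc] using mem_inter.2 ⟨haf, hae'⟩
  · simpa [ha, eq_comm] using mem_inter.2 ⟨hcf, hce⟩

lemma IsSat3.goodPair_of_notMem (hsat : IsSat3 E) {x y z : V}
    (hxy : x ≠ y) (hxz : x ≠ z) (hyz : y ≠ z) (hE : ({x, y, z} : Finset V) ∉ E) :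
    GoodPair E x y ∨ GoodPair E x z ∨ GoodPair E y z := by
  set t : Finset V := {x, y, z}
  have ht : #t = 3 := card_eq_three.2 ⟨x, y, z, hxy, hxz, hyz, rfl⟩
  obtain ⟨e₁, h₁, e₂, h₂, e₃, h₃, a, b, c, h₁₂, h₂₃, h₁₃, hab, hbc, hac, h₁₂₃⟩ :=
    hsat.2.2 t ht hE
  obtain ⟨ha₁, ha₂⟩ := mem_of_inter_eq_singleton h₁₂
  obtain ⟨hb₂, hb₃⟩ := mem_of_inter_eq_singleton h₂₃
  obtain ⟨hc₁, hc₃⟩ := mem_of_inter_eq_singleton h₁₃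
  have old {s : Finset V} {w : V} (hs : s ∈ insert t E) (hts : t ∩ s = {w}) : s ∈ E :=
    (mem_insert.1 hs).resolve_left fun hst => by
      subst hst; rw [inter_self] at hts; simp [hts] at ht
  suffices ∃ u ∈ t, ∃ v ∈ t, u ≠ v ∧ GoodPair E u v by
    obtain ⟨u, hu, v, hv, huv, h⟩ := this
    simp only [t, mem_insert, mem_singleton] at hu hv
    rcases hu with rfl | rfl | rfl <;> rcases hv with rfl | rfl | rfl <;>
      simp_all [GoodPair.symm h]
  rcases mem_insert.1 h₁ with rfl | h₁
  · exact ⟨a, ha₁, c, hc₁, hac, e₂, e₃,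
      isLink_of_inter_eq_singleton (old h₂ h₁₂) (old h₃ h₁₃) h₁₂ h₁₃ h₂₃ hab hbc hac⟩
  rcases mem_insert.1 h₂ with rfl | h₂
  · exact ⟨a, ha₂, b, hb₂, hab, e₁, e₃, isLink_of_inter_eq_singleton h₁ (old h₃ h₂₃)
      (by rwa [inter_comm]) h₂₃ h₁₃ hac hbc.symm hab⟩
  rcases mem_insert.1 h₃ with rfl | h₃
  · exact ⟨c, hc₃, b, hb₃, hbc.symm, e₁, e₂, isLink_of_inter_eq_singleton h₁ h₂
      (by rwa [inter_comm]) (by rwa [inter_comm]) h₁₂ hac.symm hab hbc.symm⟩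
  exact absurd ⟨e₁, h₁, e₂, h₂, e₃, h₃, a, b, c, h₁₂, h₂₃, h₁₃, hab, hbc, hac, h₁₂₃⟩ hsat.2.1

end Saturation

section Counting

variable [DecidableEq V] {E : Finset (Finset V)}

def nbhd (E : Finset (Finset V)) (w : V) : Finset V :=
  (E.filter (w ∈ ·)).biUnion (·.erase w)

lemma mem_nbhd {u w : V} : u ∈ nbhd E w ↔ Adj E u w := by
  simp only [nbhd, Adj, mem_biUnion, mem_filter, mem_erase]
  aesop

lemma card_nbhd_le (hE : IsUniform3 E) (w : V) : #(nbhd E w) ≤ 2 * deg E w := by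
  calc #(nbhd E w) ≤ ∑ e ∈ E.filter (w ∈ ·), #(e.erase w) := card_biUnion_le
    _ = ∑ e ∈ E.filter (w ∈ ·), 2 := sum_congr rfl fun e he => by
        rw [mem_filter] at he
        rw [card_erase_of_mem he.2, hE e he.1]
    _ = 2 * deg E w := by rw [sum_const, smul_eq_mul, mul_comm, deg]

lemma sum_deg_eq [Fintype V] (hE : IsUniform3 E) : ∑ v, deg E v = 3 * #E := by
  calc ∑ v, deg E v = ∑ e ∈ E, #(univ.bipartiteBelow (· ∈ ·) e) :=
        sum_card_bipartiteAbove_eq_sum_card_bipartiteBelow _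
    _ = ∑ e ∈ E, 3 := sum_congr rfl fun e he => by simpa [bipartiteBelow] using hE e he
    _ = 3 * #E := by rw [sum_const, smul_eq_mul, mul_comm]

lemma sum_sq_deg_mul_le [Fintype V] (hE : IsUniform3 E) {W : Finset V} {t s : ℕ}
    (hW : ∀ w ∈ W, deg E w * t ≤ s) : (∑ w ∈ W, deg E w ^ 2) * t ≤ 3 * #E * s := by
  calc (∑ w ∈ W, deg E w ^ 2) * t = ∑ w ∈ W, deg E w * (deg E w * t) := by
        rw [sum_mul]; exact sum_congr rfl fun w _ => by ring
    _ ≤ ∑ w ∈ W, deg E w * s := sum_le_sum fun w hw => Nat.mul_le_mul_left _ (hW w hw)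
    _ ≤ ∑ w, deg E w * s := sum_le_sum_of_subset (subset_univ W)
    _ = 3 * #E * s := by rw [← sum_mul, sum_deg_eq hE]

end Counting

lemma three_mul_add_mul_add_mul_le_sq {a b c d : ℕ} (h : a + b + c ≤ 2 * d) :
    3 * (a * b + a * c + b * c) ≤ 4 * d ^ 2 := by
  nlinarith [two_mul_le_add_sq a b, two_mul_le_add_sq a c, two_mul_le_add_sq b c]

section Transversal

variable [DecidableEq V] {A₁ A₂ A₃ : Finset V}

lemma card_inter_add_card_inter_add_card_inter_le (s : Finset V) (h₁₂ : Disjoint A₁ A₂)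
    (h₁₃ : Disjoint A₁ A₃) (h₂₃ : Disjoint A₂ A₃) :
    #(s ∩ A₁) + #(s ∩ A₂) + #(s ∩ A₃) ≤ #s := by
  rw [← card_union_of_disjoint (h₁₂.mono inter_subset_right inter_subset_right),
    ← card_union_of_disjoint (disjoint_union_left.2 ⟨h₁₃.mono inter_subset_right
      inter_subset_right, h₂₃.mono inter_subset_right inter_subset_right⟩),
    ← inter_union_distrib_left, ← inter_union_distrib_left]
  exact card_le_card inter_subset_left

lemma injOn_triple (h₁₂ : Disjoint A₁ A₂) (h₁₃ : Disjoint A₁ A₃) (h₂₃ : Disjoint A₂ A₃) :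
    Set.InjOn (fun p : V × V × V => ({p.1, p.2.1, p.2.2} : Finset V)) ↑(A₁ ×ˢ A₂ ×ˢ A₃) := by
  rintro ⟨x, y, z⟩ hp ⟨x', y', z'⟩ hp' h
  simp only [coe_product, Set.mem_prod, mem_coe] at hp hp'
  have hx : x' ∈ ({x, y, z} : Finset V) := by simp [h]
  have hy : y' ∈ ({x, y, z} : Finset V) := by simp [h]
  have hz : z' ∈ ({x, y, z} : Finset V) := by simp [h]
  simp only [mem_insert, mem_singleton] at hx hy hz
  grind [disjoint_left]

def nbhdTriples (E : Finset (Finset V)) (A₁ A₂ A₃ : Finset V) (w : V) : Finset (V × V × V) :=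
  (nbhd E w ∩ A₁) ×ˢ (nbhd E w ∩ A₂) ×ˢ A₃ ∪ (nbhd E w ∩ A₁) ×ˢ A₂ ×ˢ (nbhd E w ∩ A₃) ∪
    A₁ ×ˢ (nbhd E w ∩ A₂) ×ˢ (nbhd E w ∩ A₃)

lemma three_mul_card_nbhdTriples_le {E : Finset (Finset V)} (hE : IsUniform3 E) {k : ℕ}
    (h₁ : #A₁ = k) (h₂ : #A₂ = k) (h₃ : #A₃ = k)
    (h₁₂ : Disjoint A₁ A₂) (h₁₃ : Disjoint A₁ A₃) (h₂₃ : Disjoint A₂ A₃) (w : V) :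
    3 * #(nbhdTriples E A₁ A₂ A₃ w) ≤ 4 * k * deg E w ^ 2 := by
  have hsum : #(nbhd E w ∩ A₁) + #(nbhd E w ∩ A₂) + #(nbhd E w ∩ A₃) ≤ 2 * deg E w :=
    (card_inter_add_card_inter_add_card_inter_le _ h₁₂ h₁₃ h₂₃).trans (card_nbhd_le hE w)
  calc 3 * #(nbhdTriples E A₁ A₂ A₃ w)
      ≤ 3 * (k * (#(nbhd E w ∩ A₁) * #(nbhd E w ∩ A₂) +
        #(nbhd E w ∩ A₁) * #(nbhd E w ∩ A₃) + #(nbhd E w ∩ A₂) * #(nbhd E w ∩ A₃))) := by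
        refine Nat.mul_le_mul_left _ ((card_union_le _ _).trans
          ((Nat.add_le_add_right (card_union_le _ _) _).trans ?_))
        simp only [card_product, h₁, h₂, h₃]
        linarith
    _ ≤ 4 * k * deg E w ^ 2 := by
        have := three_mul_add_mul_add_mul_le_sq hsum
        nlinarith

lemma IsSat3.three_mul_cube_le {E : Finset (Finset V)} (hsat : IsSat3 E) {W : Finset V} {k : ℕ}
    (h₁ : #A₁ = k) (h₂ : #A₂ = k) (h₃ : #A₃ = k)
    (h₁₂ : Disjoint A₁ A₂) (h₁₃ : Disjoint A₁ A₃) (h₂₃ : Disjoint A₂ A₃)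
    (hW₁₂ : ∀ u ∈ A₁, ∀ v ∈ A₂, ∀ w, Adj E u w → Adj E v w → w ∈ W)
    (hW₁₃ : ∀ u ∈ A₁, ∀ v ∈ A₃, ∀ w, Adj E u w → Adj E v w → w ∈ W)
    (hW₂₃ : ∀ u ∈ A₂, ∀ v ∈ A₃, ∀ w, Adj E u w → Adj E v w → w ∈ W) :
    3 * k ^ 3 ≤ 3 * #E + 4 * k * ∑ w ∈ W, deg E w ^ 2 := by
  set T := A₁ ×ˢ A₂ ×ˢ A₃
  have hcover : T ⊆ T.filter (fun p => {p.1, p.2.1, p.2.2} ∈ E) ∪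
      W.biUnion (nbhdTriples E A₁ A₂ A₃) := by
    rintro ⟨x, y, z⟩ hp
    simp only [T, mem_product] at hp
    obtain ⟨hx, hy, hz⟩ := hp
    by_cases hE : ({x, y, z} : Finset V) ∈ E
    · simp [T, hx, hy, hz, hE]
    refine mem_union_right _ (mem_biUnion.2 ?_)
    rcases hsat.goodPair_of_notMem (disjoint_iff_ne.1 h₁₂ x hx y hy)
      (disjoint_iff_ne.1 h₁₃ x hx z hz) (disjoint_iff_ne.1 h₂₃ y hy z hz) hE with h | h | h
    · obtain ⟨w, hxw, hyw⟩ := h.exists_adj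
      exact ⟨w, hW₁₂ x hx y hy w hxw hyw, by simp [nbhdTriples, mem_nbhd, *]⟩
    · obtain ⟨w, hxw, hzw⟩ := h.exists_adj
      exact ⟨w, hW₁₃ x hx z hz w hxw hzw, by simp [nbhdTriples, mem_nbhd, *]⟩
    · obtain ⟨w, hyw, hzw⟩ := h.exists_adj
      exact ⟨w, hW₂₃ y hy z hz w hyw hzw, by simp [nbhdTriples, mem_nbhd, *]⟩
  calc 3 * k ^ 3 = 3 * #T := by simp [T, h₁, h₂, h₃]; ring
    _ ≤ 3 * (#(T.filter (fun p => {p.1, p.2.1, p.2.2} ∈ E)) +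
        #(W.biUnion (nbhdTriples E A₁ A₂ A₃))) :=
      Nat.mul_le_mul_left _ ((card_le_card hcover).trans (card_union_le _ _))
    _ ≤ 3 * (#E + ∑ w ∈ W, #(nbhdTriples E A₁ A₂ A₃ w)) := Nat.mul_le_mul_left _ (add_le_add
      (card_le_card_of_injOn _ (fun p hp => (mem_filter.1 hp).2)
        ((injOn_triple h₁₂ h₁₃ h₂₃).mono (filter_subset _ _))) card_biUnion_le)
    _ ≤ 3 * #E + 4 * k * ∑ w ∈ W, deg E w ^ 2 := by
      rw [mul_add, mul_sum, mul_sum]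
      exact Nat.add_le_add_left (sum_le_sum fun w _ =>
        three_mul_card_nbhdTriples_le hsat.1 h₁ h₂ h₃ h₁₂ h₁₃ h₂₃ w) _

end Transversal

lemma false_of_three_mul_cube_le {k l n e P : ℕ} (hn : 0 < n) (hl : 32 * l ^ 3 < n)
    (hk : 4 * n ≤ k * l) (he : e ≤ 2 * n) (hcount : 3 * k ^ 3 ≤ 3 * e + 4 * k * P)
    (hP : P * l ^ 2 ≤ 3 * e * n) : False := by
  have hupper : 3 * k ^ 3 * l ^ 2 ≤ 6 * n * l ^ 2 + 24 * k * n ^ 2 :=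
    calc 3 * k ^ 3 * l ^ 2 ≤ (3 * e + 4 * k * P) * l ^ 2 := Nat.mul_le_mul_right _ hcount
      _ = 3 * e * l ^ 2 + 4 * k * (P * l ^ 2) := by ring
      _ ≤ 3 * (2 * n) * l ^ 2 + 4 * k * (3 * (2 * n) * n) :=
          add_le_add (by gcongr) (Nat.mul_le_mul_left _ (hP.trans (by gcongr)))
      _ = 6 * n * l ^ 2 + 24 * k * n ^ 2 := by ring
  have hlower : 48 * k * n ^ 2 ≤ 3 * k ^ 3 * l ^ 2 :=
    calc 48 * k * n ^ 2 = 3 * k * (4 * n) ^ 2 := by ring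
      _ ≤ 3 * k * (k * l) ^ 2 := by gcongr
      _ = 3 * k ^ 3 * l ^ 2 := by ring
  have hkn : 4 * k * n ≤ l ^ 2 := by
    have : 6 * n * (4 * k * n) ≤ 6 * n * l ^ 2 := by nlinarith
    exact Nat.le_of_mul_le_mul_left this (by positivity)
  have : 16 * n ^ 2 ≤ l ^ 3 :=
    calc 16 * n ^ 2 = 4 * n * (4 * n) := by ring
      _ ≤ 4 * n * (k * l) := by gcongr
      _ = 4 * k * n * l := by ring
      _ ≤ l ^ 2 * l := by gcongr
      _ = l ^ 3 := by ring
  nlinarith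

lemma eventually_mul_pow_three_lt {ℓ : ℕ → ℕ}
    (h : Filter.Tendsto (fun n => (ℓ n : ℝ) ^ 3 / n) Filter.atTop (nhds 0)) (c : ℕ) :
    ∀ᶠ n in Filter.atTop, c * ℓ n ^ 3 < n := by
  filter_upwards [h.eventually (gt_mem_nhds (by positivity : (0 : ℝ) < 1 / (c + 1))),
    Filter.eventually_gt_atTop 0] with n hn hn₀
  rw [div_lt_div_iff₀ (by positivity) (by positivity), one_mul] at hn
  have : (c + 1) * ℓ n ^ 3 < n := by exact_mod_cast (by linarith : ((c : ℝ) + 1) * ℓ n ^ 3 < n)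
  nlinarith

lemma le_ceil_div_mul (m : ℕ) {l : ℕ} (hl : 0 < l) : m ≤ ⌈(m : ℝ) / l⌉₊ * l := by
  have := Nat.le_ceil ((m : ℝ) / l)
  rw [div_le_iff₀ (by positivity)] at this
  exact_mod_cast this

lemma notMem_of_adj_of_adj [DecidableEq V] {E : Finset (Finset V)} {H Hᵢ Hⱼ Sᵢ Sⱼ : Set V}
    (hSᵢ : ∀ v ∈ Sᵢ, ∀ h ∈ H \ Hᵢ, ¬ ∃ e ∈ E, v ∈ e ∧ h ∈ e)
    (hSⱼ : ∀ v ∈ Sⱼ, ∀ h ∈ H \ Hⱼ, ¬ ∃ e ∈ E, v ∈ e ∧ h ∈ e) (hH : Disjoint Hᵢ Hⱼ)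
    {u v w : V} (hu : u ∈ Sᵢ) (hv : v ∈ Sⱼ) (huw : Adj E u w) (hvw : Adj E v w) : w ∉ H :=
  fun hw => Set.disjoint_left.1 hH (by_contra fun h => hSᵢ u hu w ⟨hw, h⟩ huw.2)
    (by_contra fun h => hSⱼ v hv w ⟨hw, h⟩ hvw.2)

lemma Set.exists_finset_subset_card_eq [Finite V] {S : Set V} {k : ℕ} (h : k ≤ S.ncard) :
    ∃ A : Finset V, ↑A ⊆ S ∧ #A = k := by
  obtain ⟨T, hTS, hT⟩ := S.exists_subset_card_eq h
  exact ⟨T.toFinite.toFinset, by simpa using hTS, by rwa [← ncard_eq_toFinset_card]⟩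

theorem no_triple_partition_general (ℓ : ℕ → ℕ) (hpos : ∀ n, 0 < ℓ n)
    (hsmall : Filter.Tendsto (fun n => ((ℓ n : ℝ)) ^ 3 / n) Filter.atTop (nhds 0)) :
    ∃ n₀ : ℕ, ∀ n : ℕ, n₀ ≤ n → ∀ E : Finset (Finset (Fin n)),
      IsSat3 E → E.card ≤ 2 * n →
      ∀ H Q S : Set (Fin n),
        H = {v : Fin n | (n : ℝ) / (ℓ n : ℝ) ^ 2 ≤ (deg E v : ℝ)} →
        Q = {v : Fin n | ∃ u₁ ∈ H, ∃ u₂ ∈ H, u₁ ≠ u₂ ∧ Adj E v u₁ ∧ Adj E v u₂} →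
        S = Set.univ \ (Q ∪ H) →
        ¬ ∃ S₁ S₂ S₃ H₁ H₂ H₃ : Set (Fin n),
            S₁ ∪ S₂ ∪ S₃ = S ∧ H₁ ∪ H₂ ∪ H₃ = H ∧
            Disjoint S₁ S₂ ∧ Disjoint S₁ S₃ ∧ Disjoint S₂ S₃ ∧
            Disjoint H₁ H₂ ∧ Disjoint H₁ H₃ ∧ Disjoint H₂ H₃ ∧
            (4 * (n : ℝ) / (ℓ n : ℝ) ≤ S₁.ncard) ∧
            (4 * (n : ℝ) / (ℓ n : ℝ) ≤ S₂.ncard) ∧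
            (4 * (n : ℝ) / (ℓ n : ℝ) ≤ S₃.ncard) ∧
            (∀ v ∈ S₁, ∀ h ∈ H \ H₁, ¬ ∃ e ∈ E, v ∈ e ∧ h ∈ e) ∧
            (∀ v ∈ S₂, ∀ h ∈ H \ H₂, ¬ ∃ e ∈ E, v ∈ e ∧ h ∈ e) ∧
            (∀ v ∈ S₃, ∀ h ∈ H \ H₃, ¬ ∃ e ∈ E, v ∈ e ∧ h ∈ e) := by
  classical
  obtain ⟨n₀, hn₀⟩ := Filter.eventually_atTop.1 (eventually_mul_pow_three_lt hsmall 32)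
  refine ⟨n₀, fun n hn E hsat hE H _ _ hH _ _ => ?_⟩
  rintro ⟨S₁, S₂, S₃, H₁, H₂, H₃, -, -, hS₁₂, hS₁₃, hS₂₃, hH₁₂, hH₁₃, hH₂₃, hc₁, hc₂, hc₃,
    hN₁, hN₂, hN₃⟩
  have hℓn := hn₀ n hn
  set k := ⌈((4 * n : ℕ) : ℝ) / ℓ n⌉₊
  have pick (T : Set (Fin n)) (hT : 4 * (n : ℝ) / ℓ n ≤ T.ncard) :
      ∃ A : Finset (Fin n), ↑A ⊆ T ∧ #A = k :=
    Set.exists_finset_subset_card_eq (Nat.ceil_le.2 (by exact_mod_cast hT))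
  obtain ⟨A₁, hA₁, hk₁⟩ := pick S₁ hc₁
  obtain ⟨A₂, hA₂, hk₂⟩ := pick S₂ hc₂
  obtain ⟨A₃, hA₃, hk₃⟩ := pick S₃ hc₃
  set W : Finset (Fin n) := univ.filter (fun w => w ∉ H)
  have hdeg : ∀ w ∈ W, deg E w * ℓ n ^ 2 ≤ n := by
    intro w hw
    simp only [W, hH, mem_filter, mem_univ, true_and, Set.mem_ofPred_eq, not_le] at hw
    rw [lt_div_iff₀ (by have := hpos n; positivity)] at hw
    exact_mod_cast hw.le
  refine false_of_three_mul_cube_le (by omega) hℓn (le_ceil_div_mul _ (hpos n)) hE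
    (hsat.three_mul_cube_le hk₁ hk₂ hk₃ (disjoint_coe.1 (hS₁₂.mono hA₁ hA₂))
      (disjoint_coe.1 (hS₁₃.mono hA₁ hA₃)) (disjoint_coe.1 (hS₂₃.mono hA₂ hA₃)) ?_ ?_ ?_)
    (sum_sq_deg_mul_le hsat.1 hdeg)
  · exact fun u hu v hv w huw hvw => mem_filter.2 ⟨mem_univ w,
      notMem_of_adj_of_adj hN₁ hN₂ hH₁₂ (hA₁ hu) (hA₂ hv) huw hvw⟩
  · exact fun u hu v hv w huw hvw => mem_filter.2 ⟨mem_univ w,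
      notMem_of_adj_of_adj hN₁ hN₃ hH₁₃ (hA₁ hu) (hA₃ hv) huw hvw⟩
  · exact fun u hu v hv w huw hvw => mem_filter.2 ⟨mem_univ w,
      notMem_of_adj_of_adj hN₂ hN₃ hH₂₃ (hA₂ hu) (hA₃ hv) huw hvw⟩

theorem no_triple_partition (ℓ : ℕ → ℕ) (hpos : ∀ n, 0 < ℓ n)
    (htop : Filter.Tendsto ℓ Filter.atTop Filter.atTop)
    (hsmall : Filter.Tendsto (fun n => ((ℓ n : ℝ)) ^ 3 / n) Filter.atTop (nhds 0)) :
    ∃ n₀ : ℕ, ∀ n : ℕ, n₀ ≤ n → ∀ E : Finset (Finset (Fin n)),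
      IsSat3 E → E.card ≤ 2 * n →
      ∀ H Q S : Set (Fin n),
        H = {v : Fin n | (n : ℝ) / (ℓ n : ℝ) ^ 2 ≤ (deg E v : ℝ)} →
        Q = {v : Fin n | ∃ u₁ ∈ H, ∃ u₂ ∈ H, u₁ ≠ u₂ ∧ Adj E v u₁ ∧ Adj E v u₂} →
        S = Set.univ \ (Q ∪ H) →
        ¬ ∃ S₁ S₂ S₃ H₁ H₂ H₃ : Set (Fin n),
            S₁ ∪ S₂ ∪ S₃ = S ∧ H₁ ∪ H₂ ∪ H₃ = H ∧
            Disjoint S₁ S₂ ∧ Disjoint S₁ S₃ ∧ Disjoint S₂ S₃ ∧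
            Disjoint H₁ H₂ ∧ Disjoint H₁ H₃ ∧ Disjoint H₂ H₃ ∧
            (4 * (n : ℝ) / (ℓ n : ℝ) ≤ S₁.ncard) ∧
            (4 * (n : ℝ) / (ℓ n : ℝ) ≤ S₂.ncard) ∧
            (4 * (n : ℝ) / (ℓ n : ℝ) ≤ S₃.ncard) ∧
            (∀ v ∈ S₁, ∀ h ∈ H \ H₁, ¬ ∃ e ∈ E, v ∈ e ∧ h ∈ e) ∧
            (∀ v ∈ S₂, ∀ h ∈ H \ H₂, ¬ ∃ e ∈ E, v ∈ e ∧ h ∈ e) ∧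
            (∀ v ∈ S₃, ∀ h ∈ H \ H₃, ¬ ∃ e ∈ E, v ∈ e ∧ h ∈ e) :=
  no_triple_partition_general ℓ hpos hsmall
end

section
/- Let G be a C_3^{(3)}-saturated 3-uniform hypergraph, let ℓ ≥ 9 be an integer, and let h be a vertex of G. Then there are at most 8ℓ^2 edges e ∈ E(G) containing h whose other two vertices can be labeled u, v so that: d(u) ≤ 8, d(v) < ℓ, d(hu) = 1, d(hv) = 1, and every edge of G containing u other than e has all three of its vertices of degree less than ℓ. -/
open Finset

variable {V : Type*}

/-!
Fix one counted edge `{h, u, v}`. If `deg h < ℓ` there are fewer than `ℓ` edges at `h` at all.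
Otherwise every other counted edge `{h, u', v'}` meets `{h, u, v}` only in `h` and, as
`codeg h u' = 1`, is determined by its label `u'`. If `{u, v, u'}` is not an edge, saturation
yields a loose path of two edges between two of `u, v, u'` that misses the third. A `u,v`-path
would close a `C₃⁽³⁾` with `{h, u, v}`; for the other paths flatness at `u` or at `u'` (and, once
more, `C₃⁽³⁾`-freeness) makes the middle vertex of degree `< ℓ`. So `u'` is a neighbour of `u` or
a neighbour of a light neighbour of `u` or `v`: at most `16 + 32ℓ + 4ℓ²` choices.
-/

section

variable [DecidableEq V] {E : Finset (Finset V)}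

theorem eq_of_codeg_eq_one {x y : V} (hc : codeg E x y = 1) {f g : Finset V}
    (hf : f ∈ E) (hxf : x ∈ f) (hyf : y ∈ f) (hg : g ∈ E) (hxg : x ∈ g) (hyg : y ∈ g) :
    f = g :=
  Finset.card_le_one.1 hc.le f (mem_filter.2 ⟨hf, hxf, hyf⟩) g (mem_filter.2 ⟨hg, hxg, hyg⟩)

theorem hasC3_of_inter_eq {e₁ e₂ e₃ : Finset V} (h₁ : e₁ ∈ E) (h₂ : e₂ ∈ E) (h₃ : e₃ ∈ E)
    {a b c : V} (h₁₂ : e₁ ∩ e₂ = {a}) (h₂₃ : e₂ ∩ e₃ = {b}) (h₁₃ : e₁ ∩ e₃ = {c})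
    (hab : a ≠ b) (hbc : b ≠ c) (hac : a ≠ c) : HasC3 E := by
  refine ⟨e₁, h₁, e₂, h₂, e₃, h₃, a, b, c, h₁₂, h₂₃, h₁₃, hab, hbc, hac, ?_⟩
  rw [h₁₂, singleton_inter_of_notMem]
  intro ha₃
  have : a ∈ e₂ ∩ e₃ := mem_inter.2 ⟨(mem_inter.1 (h₁₂ ▸ mem_singleton_self a)).2, ha₃⟩
  exact hab (mem_singleton.1 (h₂₃ ▸ this))

/-- The body of `HasC3`. -/
def IsLooseTriangle (e₁ e₂ e₃ : Finset V) : Prop :=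
  ∃ a b c : V, e₁ ∩ e₂ = {a} ∧ e₂ ∩ e₃ = {b} ∧ e₁ ∩ e₃ = {c} ∧
    a ≠ b ∧ b ≠ c ∧ a ≠ c ∧ e₁ ∩ e₂ ∩ e₃ = ∅

namespace IsLooseTriangle

variable {e₁ e₂ e₃ : Finset V}

theorem rotate (ht : IsLooseTriangle e₁ e₂ e₃) : IsLooseTriangle e₂ e₃ e₁ := by
  obtain ⟨a, b, c, h₁₂, h₂₃, h₁₃, hab, hbc, hac, h₁₂₃⟩ := ht
  refine ⟨b, c, a, h₂₃, by rw [inter_comm, h₁₃], by rw [inter_comm, h₁₂], hbc, hac.symm,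
    hab.symm, ?_⟩
  rw [inter_comm, ← inter_assoc, h₁₂₃]

theorem swap (ht : IsLooseTriangle e₁ e₂ e₃) : IsLooseTriangle e₁ e₃ e₂ := by
  obtain ⟨a, b, c, h₁₂, h₂₃, h₁₃, hab, hbc, hac, h₁₂₃⟩ := ht
  refine ⟨c, b, a, h₁₃, by rw [inter_comm, h₂₃], h₁₂, hbc.symm, hab.symm, hac.symm, ?_⟩
  rw [inter_assoc, inter_comm e₃, ← inter_assoc, h₁₂₃]

theorem ne_left (ht : IsLooseTriangle e₁ e₂ e₃) : e₁ ≠ e₂ := by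
  rintro rfl
  obtain ⟨a, b, c, h₁₁, -, h₁₃, -, -, hac, -⟩ := ht
  rw [inter_self] at h₁₁
  exact hac (mem_singleton.1 (h₁₁ ▸ (mem_inter.1 (h₁₃ ▸ mem_singleton_self c)).1)).symm

end IsLooseTriangle

theorem IsSat3.exists_isLooseTriangle (hsat : IsSat3 E) {t : Finset V} (ht : t.card = 3)
    (htE : t ∉ E) : ∃ f₁ ∈ E, ∃ f₂ ∈ E, IsLooseTriangle t f₁ f₂ := by
  obtain ⟨-, hfree, hadd⟩ := hsat
  obtain ⟨e₁, h₁, e₂, h₂, e₃, h₃, hT⟩ := hadd t ht htE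
  have hT : IsLooseTriangle e₁ e₂ e₃ := hT
  have others_mem {e f g : Finset V} (hT : IsLooseTriangle e f g) (he : e = t) (hf : f ∈ insert t E)
      (hg : g ∈ insert t E) : f ∈ E ∧ g ∈ E := by
    subst he
    exact ⟨(mem_insert.1 hf).resolve_left hT.ne_left.symm,
      (mem_insert.1 hg).resolve_left hT.swap.ne_left.symm⟩
  rcases mem_insert.1 h₁ with rfl | h₁E
  · exact ⟨e₂, (others_mem hT rfl h₂ h₃).1, e₃, (others_mem hT rfl h₂ h₃).2, hT⟩
  rcases mem_insert.1 h₂ with rfl | h₂E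
  · exact ⟨e₃, (others_mem hT.rotate rfl h₃ h₁).1, e₁, h₁E, hT.rotate⟩
  rcases mem_insert.1 h₃ with rfl | h₃E
  · exact ⟨e₁, h₁E, e₂, h₂E, hT.rotate.rotate⟩
  exact absurd ⟨e₁, h₁E, e₂, h₂E, e₃, h₃E, hT⟩ hfree

theorem IsLink.symm {x y : V} {f₁ f₂ : Finset V} (hl : IsLink E x y f₁ f₂) :
    IsLink E y x f₂ f₁ := by
  obtain ⟨h₁, h₂, hx, hy, hx₂, hy₁, w, hw, h₁₂⟩ := hl
  exact ⟨h₂, h₁, hy, hx, hy₁, hx₂, w, by rwa [pair_comm], by rwa [inter_comm]⟩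

theorem IsLink.ne {x y : V} {f₁ f₂ : Finset V} (hl : IsLink E x y f₁ f₂) : x ≠ y := by
  rintro rfl
  obtain ⟨-, -, hx₁, -, -, hx₁', -⟩ := hl
  exact hx₁' hx₁

theorem IsLooseTriangle.exists_isLink {t f₁ f₂ : Finset V} (ht : IsLooseTriangle t f₁ f₂)
    (hf₁ : f₁ ∈ E) (hf₂ : f₂ ∈ E) :
    ∃ x y, t ∩ f₁ = {x} ∧ t ∩ f₂ = {y} ∧ IsLink E x y f₁ f₂ := by
  obtain ⟨x, b, y, hx, hb, hy, hxb, hby, hxy, -⟩ := ht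
  have mem {s f : Finset V} {a : V} (h : s ∩ f = {a}) : a ∈ s ∧ a ∈ f :=
    mem_inter.1 (h ▸ mem_singleton_self a)
  refine ⟨x, y, hx, hy, hf₁, hf₂, (mem hx).2, (mem hy).2, fun hx₂ => hxy ?_, fun hy₁ => hxy ?_,
    b, by simp [hxb.symm, hby], hb⟩
  · exact mem_singleton.1 (hy ▸ mem_inter.2 ⟨(mem hx).1, hx₂⟩)
  · exact (mem_singleton.1 (hx ▸ mem_inter.2 ⟨(mem hy).1, hy₁⟩)).symm

def neighborFinset (E : Finset (Finset V)) (x : V) : Finset V :=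
  (E.filter (x ∈ ·)).biUnion (·.erase x)

def lightSecondNeighborFinset (E : Finset (Finset V)) (ℓ : ℕ) (x : V) : Finset V :=
  ((neighborFinset E x).filter (deg E · < ℓ)).biUnion (neighborFinset E)

theorem mem_neighborFinset {x y : V} : y ∈ neighborFinset E x ↔ Adj E x y := by
  simp only [neighborFinset, mem_biUnion, mem_filter, mem_erase, Adj]
  grind

theorem card_neighborFinset_le (hE : IsUniform3 E) (x : V) :
    #(neighborFinset E x) ≤ deg E x * 2 :=
  card_biUnion_le_card_mul _ _ _ fun e he => by
    rw [card_erase_of_mem (mem_filter.1 he).2, hE e (mem_filter.1 he).1]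

theorem card_lightSecondNeighborFinset_le (hE : IsUniform3 E) (ℓ : ℕ) (x : V) :
    #(lightSecondNeighborFinset E ℓ x) ≤ deg E x * 2 * (ℓ * 2) := by
  refine (card_biUnion_le_card_mul _ _ (ℓ * 2) fun y hy => ?_).trans ?_
  · exact (card_neighborFinset_le hE y).trans (by gcongr; exact (mem_filter.1 hy).2.le)
  · gcongr
    exact (card_filter_le _ _).trans (card_neighborFinset_le hE x)

theorem IsLink.mem_lightSecondNeighborFinset {ℓ : ℕ} {x y : V} {f₁ f₂ : Finset V}
    (hl : IsLink E x y f₁ f₂) (hdeg : ∀ w ∈ f₁ ∩ f₂, deg E w < ℓ) :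
    y ∈ lightSecondNeighborFinset E ℓ x := by
  obtain ⟨h₁, h₂, hx, hy, -, -, w, hw, h₁₂⟩ := hl
  have hw₁₂ : w ∈ f₁ ∩ f₂ := h₁₂ ▸ mem_singleton_self w
  simp only [mem_insert, mem_singleton, not_or] at hw
  refine mem_biUnion.2 ⟨w, mem_filter.2 ⟨mem_neighborFinset.2 ⟨?_, f₁, h₁, hx, ?_⟩, hdeg w hw₁₂⟩,
    mem_neighborFinset.2 ⟨hw.2, f₂, h₂, (mem_inter.1 hw₁₂).2, hy⟩⟩
  · exact Ne.symm hw.1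
  · exact (mem_inter.1 hw₁₂).1

theorem notMem_of_inter_eq_singleton {s f : Finset V} {a x : V} (h : s ∩ f = {a}) (hx : x ∈ s)
    (hxa : x ≠ a) : x ∉ f :=
  fun hxf => hxa (mem_singleton.1 (h ▸ mem_inter.2 ⟨hx, hxf⟩))

theorem card_le_card_of_codeg_eq_one {h : V} {S : Finset (Finset V)} {U : Finset V}
    (hS : ∀ f ∈ S, ∃ w ∈ U, codeg E h w = 1 ∧ f ∈ E ∧ h ∈ f ∧ w ∈ f) : #S ≤ #U := by
  have hsub : S ⊆ (U.filter (codeg E h · = 1)).biUnion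
      (fun w => E.filter fun f => h ∈ f ∧ w ∈ f) := by
    intro f hf
    obtain ⟨w, hw, hc, hfE, hh, hwf⟩ := hS f hf
    exact mem_biUnion.2 ⟨w, mem_filter.2 ⟨hw, hc⟩, mem_filter.2 ⟨hfE, hh, hwf⟩⟩
  calc #S ≤ _ := card_le_card hsub
    _ ≤ #(U.filter (codeg E h · = 1)) * 1 :=
      card_biUnion_le_card_mul _ _ _ fun w hw => (mem_filter.1 hw).2.le
    _ ≤ #U := by simpa using card_filter_le _ _

/-- The edge `{h, u, v}` is one of the edges counted in the theorem, with this labelling. -/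
structure IsOneOneFlat (E : Finset (Finset V)) (ℓ : ℕ) (h u v : V) : Prop where
  mem : {h, u, v} ∈ E
  u_ne_v : u ≠ v
  u_ne_h : u ≠ h
  v_ne_h : v ≠ h
  deg_u_le : deg E u ≤ 8
  deg_v_lt : deg E v < ℓ
  codeg_u : codeg E h u = 1
  codeg_v : codeg E h v = 1
  flat : ∀ f ∈ E, u ∈ f → f ≠ {h, u, v} → ∀ w ∈ f, deg E w < ℓ

namespace IsOneOneFlat

variable {ℓ : ℕ} {h u v u' v' : V} {f₁ f₂ : Finset V}

theorem eq_of_mem_u (he : IsOneOneFlat E ℓ h u v) {f : Finset V} (hf : f ∈ E) (hh : h ∈ f)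
    (hu : u ∈ f) : f = {h, u, v} :=
  eq_of_codeg_eq_one he.codeg_u hf hh hu he.mem (by simp) (by simp)

theorem eq_of_mem_v (he : IsOneOneFlat E ℓ h u v) {f : Finset V} (hf : f ∈ E) (hh : h ∈ f)
    (hv : v ∈ f) : f = {h, u, v} :=
  eq_of_codeg_eq_one he.codeg_v hf hh hv he.mem (by simp) (by simp)

theorem inter_eq (he : IsOneOneFlat E ℓ h u v) (he' : IsOneOneFlat E ℓ h u' v')
    (hne : ({h, u, v} : Finset V) ≠ {h, u', v'}) : ({h, u, v} : Finset V) ∩ {h, u', v'} = {h} := by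
  refine eq_singleton_iff_unique_mem.2 ⟨by simp, fun w hw => ?_⟩
  obtain ⟨hw, hw'⟩ := mem_inter.1 hw
  simp only [mem_insert, mem_singleton] at hw
  rcases hw with rfl | rfl | rfl
  · rfl
  · exact absurd (he.eq_of_mem_u he'.mem (by simp) hw').symm hne
  · exact absurd (he.eq_of_mem_v he'.mem (by simp) hw').symm hne

theorem ne_of_ne (he : IsOneOneFlat E ℓ h u v) (he' : IsOneOneFlat E ℓ h u' v')
    (hne : ({h, u, v} : Finset V) ≠ {h, u', v'}) : u ≠ u' ∧ v ≠ u' ∧ v ≠ v' := by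
  have hinter := he.inter_eq he' hne
  refine ⟨fun hu => he.u_ne_h ?_, fun hv => he.v_ne_h ?_, fun hv => he.v_ne_h ?_⟩ <;>
    refine mem_singleton.1 (hinter ▸ mem_inter.2 ⟨by simp, ?_⟩) <;> simp [*]

theorem not_goodPair (hfree : ¬ HasC3 E) (hdh : ℓ ≤ deg E h) (he : IsOneOneFlat E ℓ h u v) :
    ¬ GoodPair E u v := by
  rintro ⟨f₁, f₂, hf₁, hf₂, hu₁, hv₂, hu₂, hv₁, b, hb, h₁₂⟩
  have hh₁ : h ∉ f₁ := fun hh => (he.flat f₁ hf₁ hu₁ (by rintro rfl; simp at hv₁) h hh).not_ge hdh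
  have hh₂ : h ∉ f₂ := fun hh => hu₂ (he.eq_of_mem_v hf₂ hh hv₂ ▸ by simp)
  simp only [mem_insert, mem_singleton, not_or] at hb
  refine hfree (hasC3_of_inter_eq hf₁ he.mem hf₂ (a := u) (b := v) (c := b) ?_ ?_ h₁₂
    he.u_ne_v (Ne.symm hb.2) (Ne.symm hb.1))
  · ext w; simp only [mem_inter, mem_insert, mem_singleton]; grind
  · ext w; simp only [mem_inter, mem_insert, mem_singleton]; grind

theorem mem_lightSecondNeighborFinset_u (he : IsOneOneFlat E ℓ h u v) {y : V}
    (hl : IsLink E u y f₁ f₂) (hv : v ∉ f₁) : y ∈ lightSecondNeighborFinset E ℓ u := by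
  have hf₁e : f₁ ≠ {h, u, v} := by rintro rfl; simp at hv
  exact hl.mem_lightSecondNeighborFinset fun w hw =>
    he.flat f₁ hl.1 hl.2.2.1 hf₁e w (mem_inter.1 hw).1

theorem mem_lightSecondNeighborFinset_v (hfree : ¬ HasC3 E) (he : IsOneOneFlat E ℓ h u v)
    (he' : IsOneOneFlat E ℓ h u' v') (hne : ({h, u, v} : Finset V) ≠ {h, u', v'})
    (hl : IsLink E v u' f₁ f₂) (hu : u ∉ f₁) : u' ∈ lightSecondNeighborFinset E ℓ v := by
  obtain ⟨hf₁, hf₂, hv₁, hu'₂, hv₂, hu'₁, b, hb, h₁₂⟩ := hl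
  have hb₁₂ : b ∈ f₁ ∩ f₂ := h₁₂ ▸ mem_singleton_self b
  have hh₁ : h ∉ f₁ := fun hh => hu (he.eq_of_mem_v hf₁ hh hv₁ ▸ by simp)
  -- if `f₂` were `{h, u', v'}`, then `b = v'` and `{h, u, v}, {h, u', v'}, f₁` would form a `C₃⁽³⁾`
  have hf₂e' : f₂ ≠ {h, u', v'} := by
    rintro rfl
    have hbv' : b = v' := by
      simp only [mem_inter, mem_insert, mem_singleton] at hb₁₂ hb
      rcases hb₁₂.2 with rfl | rfl | rfl
      · exact absurd hb₁₂.1 hh₁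
      · simp at hb
      · rfl
    obtain ⟨-, hvu', hvv'⟩ := he.ne_of_ne he' hne
    refine hfree (hasC3_of_inter_eq he.mem he'.mem hf₁ (he.inter_eq he' hne) (b := v') (c := v)
      ?_ ?_ (Ne.symm he'.v_ne_h) (Ne.symm hvv') (Ne.symm he.v_ne_h))
    · ext w; simp only [mem_inter, mem_insert, mem_singleton]; grind
    · ext w; simp only [mem_inter, mem_insert, mem_singleton]; grind
  exact IsLink.mem_lightSecondNeighborFinset ⟨hf₁, hf₂, hv₁, hu'₂, hv₂, hu'₁, b, hb, h₁₂⟩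
    fun w hw => he'.flat f₂ hf₂ hu'₂ hf₂e' w (mem_inter.1 hw).2

theorem mem_neighborFinset_union (hsat : IsSat3 E) (hdh : ℓ ≤ deg E h)
    (he : IsOneOneFlat E ℓ h u v) (he' : IsOneOneFlat E ℓ h u' v')
    (hne : ({h, u, v} : Finset V) ≠ {h, u', v'}) :
    u' ∈ neighborFinset E u ∪ lightSecondNeighborFinset E ℓ u ∪
      lightSecondNeighborFinset E ℓ v := by
  obtain ⟨huu', hvu', -⟩ := he.ne_of_ne he' hne
  by_cases htE : ({u, v, u'} : Finset V) ∈ E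
  · exact mem_union_left _ (mem_union_left _
      (mem_neighborFinset.2 ⟨huu', _, htE, by simp, by simp⟩))
  have ht : #({u, v, u'} : Finset V) = 3 := by
    rw [card_insert_of_notMem (by simp [he.u_ne_v, huu']), card_pair hvu']
  obtain ⟨f₁, hf₁, f₂, hf₂, hT⟩ := hsat.exists_isLooseTriangle ht htE
  obtain ⟨x, y, hx, hy, hl⟩ := hT.exists_isLink hf₁ hf₂
  have hxy := hl.ne
  have hxt := (mem_inter.1 (hx ▸ mem_singleton_self x)).1
  have hyt := (mem_inter.1 (hy ▸ mem_singleton_self y)).1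
  simp only [mem_insert, mem_singleton] at hxt hyt
  rcases hxt with hxt | hxt | hxt <;> rcases hyt with hyt | hyt | hyt <;> subst x y
  · exact absurd rfl hxy
  · exact (he.not_goodPair hsat.2.1 hdh ⟨_, _, hl⟩).elim
  · exact mem_union_left _ (mem_union_right _
      (he.mem_lightSecondNeighborFinset_u hl
        (notMem_of_inter_eq_singleton hx (by simp) he.u_ne_v.symm)))
  · exact (he.not_goodPair hsat.2.1 hdh ⟨_, _, hl.symm⟩).elim
  · exact absurd rfl hxy
  · exact mem_union_right _ (he.mem_lightSecondNeighborFinset_v hsat.2.1 he' hne hl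
      (notMem_of_inter_eq_singleton hx (by simp) he.u_ne_v))
  · exact mem_union_left _ (mem_union_right _ (he.mem_lightSecondNeighborFinset_u hl.symm
      (notMem_of_inter_eq_singleton hy (by simp) he.u_ne_v.symm)))
  · exact mem_union_right _ (he.mem_lightSecondNeighborFinset_v hsat.2.1 he' hne hl.symm
      (notMem_of_inter_eq_singleton hy (by simp) he.u_ne_v))
  · exact absurd rfl hxy

end IsOneOneFlat

theorem card_le_of_forall_isOneOneFlat (hsat : IsSat3 E) {ℓ : ℕ} (hl : 9 ≤ ℓ) {h : V}
    {S : Finset (Finset V)} (hS : ∀ e ∈ S, ∃ u v, e = {h, u, v} ∧ IsOneOneFlat E ℓ h u v) :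
    #S ≤ 8 * ℓ ^ 2 := by
  by_cases hdh : deg E h < ℓ
  · have hSh : #S ≤ deg E h := card_le_card fun e heS => by
      obtain ⟨u, v, rfl, he⟩ := hS e heS
      exact mem_filter.2 ⟨he.mem, by simp⟩
    nlinarith
  push Not at hdh
  obtain hS₀ | ⟨_, heS⟩ := S.eq_empty_or_nonempty
  · simp [hS₀]
  obtain ⟨u, v, rfl, he⟩ := hS _ heS
  have hU : #(S.erase {h, u, v}) ≤ #(neighborFinset E u ∪ lightSecondNeighborFinset E ℓ u ∪
      lightSecondNeighborFinset E ℓ v) := card_le_card_of_codeg_eq_one fun f hf => by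
    obtain ⟨hne, hfS⟩ := mem_erase.1 hf
    obtain ⟨u', v', rfl, he'⟩ := hS _ hfS
    exact ⟨u', he.mem_neighborFinset_union hsat hdh he' hne.symm, he'.codeg_u, he'.mem,
      by simp, by simp⟩
  have hunif := hsat.1
  calc #S = #(S.erase {h, u, v}) + 1 := (card_erase_add_one heS).symm
    _ ≤ #(neighborFinset E u) + #(lightSecondNeighborFinset E ℓ u) +
        #(lightSecondNeighborFinset E ℓ v) + 1 := by
      grw [hU, card_union_le, card_union_le]
    _ ≤ 8 * 2 + 8 * 2 * (ℓ * 2) + ℓ * 2 * (ℓ * 2) + 1 := by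
      grw [card_neighborFinset_le hunif, card_lightSecondNeighborFinset_le hunif,
        card_lightSecondNeighborFinset_le hunif, he.deg_u_le, he.deg_v_lt.le]
    _ ≤ 8 * ℓ ^ 2 := by nlinarith

end

theorem few_one_one_flat_edges_general {V : Type*} [DecidableEq V]
    (E : Finset (Finset V)) (hsat : IsSat3 E) (ℓ : ℕ) (hl : 9 ≤ ℓ) (h : V) :
    ({e : Finset V | e ∈ E ∧ ∃ u v : V, e = {h, u, v} ∧ u ≠ v ∧ u ≠ h ∧ v ≠ h ∧
        deg E u ≤ 8 ∧ deg E v < ℓ ∧ codeg E h u = 1 ∧ codeg E h v = 1 ∧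
        ∀ f ∈ E, u ∈ f → f ≠ e → ∀ w ∈ f, deg E w < ℓ}).ncard ≤ 8 * ℓ ^ 2 := by
  rw [Set.ncard_eq_toFinset_card _ (E.finite_toSet.subset fun e he => he.1)]
  refine card_le_of_forall_isOneOneFlat hsat hl (h := h) fun e he => ?_
  obtain ⟨heE, u, v, rfl, h₁, h₂, h₃, h₄, h₅, h₆, h₇, h₈⟩ := (Set.Finite.mem_toFinset _).1 he
  exact ⟨u, v, rfl, heE, h₁, h₂, h₃, h₄, h₅, h₆, h₇, h₈⟩

theorem few_one_one_flat_edges {V : Type*} [Fintype V] [DecidableEq V]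
    (E : Finset (Finset V)) (hsat : IsSat3 E) (ℓ : ℕ) (hl : 9 ≤ ℓ) (h : V) :
    ({e : Finset V | e ∈ E ∧ ∃ u v : V, e = {h, u, v} ∧ u ≠ v ∧ u ≠ h ∧ v ≠ h ∧
        deg E u ≤ 8 ∧ deg E v < ℓ ∧ codeg E h u = 1 ∧ codeg E h v = 1 ∧
        ∀ f ∈ E, u ∈ f → f ≠ e → ∀ w ∈ f, deg E w < ℓ}).ncard ≤ 8 * ℓ ^ 2 :=
  few_one_one_flat_edges_general E hsat ℓ hl h
end
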